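/- Proposition 1, Equation (16): for every plant G over Σ, supervisor realization R, attack automaton A, and the arena 𝒜 constructed from G and A, and for every s ∈ P_{Σ_mΣ_{o,e}}(L(G_a||R_a||A)), with x₀ = h₁(q₀, C_R(ε)) and γ_i = C_R(P^S(s^i)) (s^i the length-i prefix of s), the state-estimate component of the arena run equals the attacked state estimate: I₁(H₂(x₀, s, γ₁…γ_{|s|})) = RE(s). -/

import Mathlib

attribute [local instance] Classical.propDecidable

noncomputable section

namespace RobustDES

/-- Events of the attacked system `Σ_m = Σ ∪ Σ_a^i ∪ Σ_a^d`:
`plain a` is a legitimate event `a ∈ Σ`, `ins a` is the inserted copy `a_i`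
and `del a` is the deleted copy `a_d`. -/
inductive Ev (S : Type) : Type
  | plain : S → Ev S
  | ins : S → Ev S
  | del : S → Ev S

/-- Extension of a partial transition function to strings. -/
def run {X E : Type} (δ : X → E → Option X) : X → List E → Option X
  | x, [] => some x
  | x, e :: s => (δ x e).bind fun y => run δ y s

/-- The language generated by a partial automaton `(X, δ, x0)`. -/
def Lang {X E : Type} (δ : X → E → Option X) (x0 : X) : Set (List E) :=
  { s | (run δ x0 s).isSome }

variable {S XG XR XA : Type}

/-- The projection `P^G : Σ_m* → Σ*` (`a, a_d ↦ a`, `a_i ↦ ε`). -/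
def PGproj : List (Ev S) → List S := fun s =>
  s.flatMap fun e =>
    match e with
    | .plain a => [a]
    | .del a => [a]
    | .ins _ => []

/-- The projection `P^S : Σ_m* → Σ*` (`a, a_i ↦ a`, `a_d ↦ ε`). -/
def PSproj : List (Ev S) → List S := fun s =>
  s.flatMap fun e =>
    match e with
    | .plain a => [a]
    | .ins a => [a]
    | .del _ => []

/-- Natural projection `P_{ΣΣo}` erasing events not in `So`. -/
def projOn (So : Set S) (s : List S) : List S :=
  s.filter fun e => decide (e ∈ So)

/-- Membership of a tagged event in `Σ_{o,e} = Σ_o ∪ Σ_a^i ∪ Σ_a^d`. -/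
def inOe (So Sa : Set S) : Ev S → Prop
  | .plain a => a ∈ So
  | .ins a => a ∈ Sa
  | .del a => a ∈ Sa

/-- Natural projection `P_{Σ_mΣ_{o,e}}` erasing the unobservable events `Σ_uo`. -/
def projOe (So : Set S) : List (Ev S) → List (Ev S) := fun s =>
  s.flatMap fun e =>
    match e with
    | .plain a => if a ∈ So then [Ev.plain a] else []
    | e => [e]

/-- Transition function of the attacked plant `G_a` (over `Σ_m`):
`δ_{G_a}(x,e) = δ_G(x, P^G(e))`. -/
def δGa (Sa : Set S) (δG : XG → S → Option XG) : XG → Ev S → Option XG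
  | x, .plain a => δG x a
  | x, .del a => if a ∈ Sa then δG x a else none
  | x, .ins a => if a ∈ Sa then some x else none

/-- Active (legitimate) event set of a supervisor state. -/
def ΓR (δR : XR → S → Option XR) (y : XR) : Set S := {e | (δR y e).isSome}

/-- Transition function of the attacked supervisor `R_a` (over `Σ_m`). -/
def δRa (Sa : Set S) (δR : XR → S → Option XR) : XR → Ev S → Option XR
  | y, .plain a => δR y a
  | y, .ins a =>
      if a ∈ Sa then (if (δR y a).isSome then δR y a else some y) else none
  | y, .del a =>
      if a ∈ Sa then (if (δR y a).isSome then some y else none) else none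

/-- `R` is a supervisor realization: every uncontrollable event is enabled
everywhere and enabled unobservable events self-loop. -/
def IsSupRealization (So Suc : Set S) (δR : XR → S → Option XR) : Prop :=
  (∀ x e, e ∈ Suc → (δR x e).isSome) ∧
  (∀ x e, e ∉ So → (δR x e).isSome → δR x e = some x)

/-- `A` is an attack automaton over `Σ_{o,e}`: it is complete on `Σ_o \ Σ_a`,
for every `e ∈ Σ_a` either `e` or `e_d` is defined, and it is undefined outside
`Σ_{o,e}`. -/
def IsAttack (So Sa : Set S) (δA : XA → Ev S → Option XA) : Prop :=
  (∀ q a, a ∈ So → a ∉ Sa → (δA q (.plain a)).isSome) ∧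
  (∀ q a, a ∈ Sa → ((δA q (.plain a)).isSome ∨ (δA q (.del a)).isSome)) ∧
  (∀ q e, ¬ inOe So Sa e → δA q e = none)

/-- Transition function of the composition `G_a || R_a || A` over `Σ_m`:
all three components move on events of `Σ_{o,e}`, only `G_a` and `R_a` move on
unobservable events. -/
def δGRA (So Sa : Set S) (δG : XG → S → Option XG) (δR : XR → S → Option XR)
    (δA : XA → Ev S → Option XA) :
    XG × XR × XA → Ev S → Option (XG × XR × XA) := fun p e =>
  match e with
  | .plain a =>
    if a ∈ So then
      match δGa Sa δG p.1 (.plain a), δRa Sa δR p.2.1 (.plain a), δA p.2.2 (.plain a) with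
      | some x, some y, some z => some (x, y, z)
      | _, _, _ => none
    else
      match δGa Sa δG p.1 (.plain a), δRa Sa δR p.2.1 (.plain a) with
      | some x, some y => some (x, y, p.2.2)
      | _, _ => none
  | e =>
      match δGa Sa δG p.1 e, δRa Sa δR p.2.1 e, δA p.2.2 e with
      | some x, some y, some z => some (x, y, z)
      | _, _, _ => none

/-- Transition function of the composition `G_a || R_a` over `Σ_m`. -/
def δGaRa (Sa : Set S) (δG : XG → S → Option XG) (δR : XR → S → Option XR) :
    XG × XR → Ev S → Option (XG × XR) := fun p e =>
  match δGa Sa δG p.1 e, δRa Sa δR p.2 e with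
  | some x, some y => some (x, y)
  | _, _ => none

/-- `R` is robust w.r.t. `G`, `X_crit` and `A`:
`δ_G(x_{0,G}, s) ∉ X_crit` for every `s ∈ L(S_A/G) = P^G(L(G_a||R_a||A))`. -/
def Robust (So Sa : Set S) (Xcrit : Set XG)
    (δG : XG → S → Option XG) (x0G : XG)
    (δR : XR → S → Option XR) (x0R : XR)
    (δA : XA → Ev S → Option XA) (x0A : XA) : Prop :=
  ∀ t ∈ Lang (δGRA So Sa δG δR δA) (x0G, x0R, x0A),
    ∀ x, run δG x0G (PGproj t) = some x → x ∉ Xcrit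

/-- Total extension `Δ_R` of `δ_R` over observable strings. -/
def ΔRrun (δR : XR → S → Option XR) : XR → List S → XR
  | y, [] => y
  | y, e :: s => ΔRrun δR ((δR y e).getD y) s

/-- Control decision `C_R(s) = Γ_R(Δ_R(x_{0,R}, s))`. -/
def CR (δR : XR → S → Option XR) (x0R : XR) (s : List S) : Set S :=
  {e | (δR (ΔRrun δR x0R s) e).isSome}

/-- The state estimate under attack
`RE(s) = {x : x = δ_{G_a}(x_{0,G}, t), t ∈ P⁻¹_{Σ_mΣ_{o,e}}(s) ∩ L(G_a||R_a||A)}`. -/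
def RE (So Sa : Set S) (δG : XG → S → Option XG) (x0G : XG)
    (δR : XR → S → Option XR) (x0R : XR)
    (δA : XA → Ev S → Option XA) (x0A : XA) (s : List (Ev S)) : Set XG :=
  {x | ∃ t, projOe So t = s ∧ t ∈ Lang (δGRA So Sa δG δR δA) (x0G, x0R, x0A) ∧
        run (δGa Sa δG) x0G t = some x}

/-! ### The arena -/

/-- Unobservable reach `UR_γ(Q)`. -/
def URch (So : Set S) (δG : XG → S → Option XG) (γ : Set S) (Q : Set XG) : Set XG :=
  {x | ∃ t : List S, (∀ a ∈ t, a ∉ So ∧ a ∈ γ) ∧ ∃ q ∈ Q, run δG q t = some x}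

/-- Observable reach `NX_e(Q)`. -/
def NXr (δG : XG → S → Option XG) (a : S) (Q : Set XG) : Set XG :=
  {x | ∃ q ∈ Q, δG q a = some x}

/-- Active event set `Γ_G(Q)` of a set of plant states. -/
def ΓGset (δG : XG → S → Option XG) (Q : Set XG) : Set S :=
  {a | ∃ x ∈ Q, (δG x a).isSome}

/-- Player-1 states of the arena. -/
abbrev AQ1 (XG XA : Type) := Set XG × XA

/-- Player-2 states of the arena. -/
abbrev AQ2 (S XG XA : Type) := Set XG × XA × Set S × Option S

/-- Player-1 transition `h₁((S₁,S₂),γ) = (UR_γ(S₁), S₂, γ, ε)`. -/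
def h1 (So : Set S) (δG : XG → S → Option XG) (p : AQ1 XG XA) (γ : Set S) :
    AQ2 S XG XA :=
  (URch So δG γ p.1, p.2, γ, none)

/-- Player-2 transition `h₂`. -/
def h2 (So Sa : Set S) (δG : XG → S → Option XG) (δA : XA → Ev S → Option XA)
    (q : AQ2 S XG XA) : Ev S → Option (AQ1 XG XA ⊕ AQ2 S XG XA)
  | .plain a =>
    if a ∈ So then
      if q.2.2.2 = some a then some (Sum.inl (q.1, q.2.1))
      else if q.2.2.2 = none ∧ a ∈ ΓGset δG q.1 ∧ a ∈ q.2.2.1 then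
        (δA q.2.1 (.plain a)).map fun z => Sum.inl (NXr δG a q.1, z)
      else none
    else none
  | .ins a =>
    if a ∈ Sa ∧ q.2.2.2 = none then
      (δA q.2.1 (.ins a)).map fun z => Sum.inr (q.1, z, q.2.2.1, some a)
    else none
  | .del a =>
    if a ∈ Sa ∧ q.2.2.2 = none ∧ a ∈ ΓGset δG q.1 ∧ a ∈ q.2.2.1 then
      (δA q.2.1 (.del a)).map fun z =>
        Sum.inr (URch So δG q.2.2.1 (NXr δG a q.1), z, q.2.2.1, none)
    else none

/-- One-step map `H₂ : Q₂ × Σ_{o,e} × Γ ⇀ Q₂` of Definition 6. -/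
def H2 (So Sa : Set S) (δG : XG → S → Option XG) (δA : XA → Ev S → Option XA)
    (q : AQ2 S XG XA) : Ev S → Set S → Option (AQ2 S XG XA)
  | .plain a, γ =>
      (h2 So Sa δG δA q (.plain a)).bind fun r =>
        match r with
        | .inl p => some (h1 So δG p γ)
        | .inr _ => none
  | .del a, _ =>
      (h2 So Sa δG δA q (.del a)).bind fun r =>
        match r with
        | .inr q' => some q'
        | .inl _ => none
  | .ins a, γ =>
      (h2 So Sa δG δA q (.ins a)).bind fun r =>
        match r with
        | .inr q' =>
            (h2 So Sa δG δA q' (.plain a)).bind fun r2 =>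
              match r2 with
              | .inl p => some (h1 So δG p γ)
              | .inr _ => none
        | .inl _ => none

/-- Extension of `H₂` to strings with a sequence of control decisions. -/
def H2run (So Sa : Set S) (δG : XG → S → Option XG) (δA : XA → Ev S → Option XA) :
    AQ2 S XG XA → List (Ev S) → List (Set S) → Option (AQ2 S XG XA)
  | q, [], [] => some q
  | q, e :: s, γ :: γs =>
      (H2 So Sa δG δA q e γ).bind fun q' => H2run So Sa δG δA q' s γs
  | _, _ :: _, [] => none
  | _, [], _ :: _ => none

/-- The sequence of control decisions `γ_i = C_R(P^S(s^i))`, `i = 1, …, |s|`. -/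
def ctrlSeq (δR : XR → S → Option XR) (x0R : XR) (s : List (Ev S)) : List (Set S) :=
  (List.range s.length).map fun i => CR δR x0R (PSproj (s.take (i + 1)))

/-- Initial arena state `q₀ = ({x_{0,G}}, x_{0,A})`. -/
def arenaInit (x0G : XG) (x0A : XA) : AQ1 XG XA := ({x0G}, x0A)

/-- The arena `𝒜` regarded as a partial automaton over `E = Γ ∪ Σ_{o,e}`. -/
def δAr (So Suc Sa : Set S) (δG : XG → S → Option XG) (δA : XA → Ev S → Option XA) :
    (AQ1 XG XA ⊕ AQ2 S XG XA) → (Set S ⊕ Ev S) → Option (AQ1 XG XA ⊕ AQ2 S XG XA)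
  | .inl p, .inl γ => if Suc ⊆ γ then some (.inr (h1 So δG p γ)) else none
  | .inr q, .inr e => h2 So Sa δG δA q e
  | _, _ => none

/-- The projection `I₁` onto the plant state-estimate component. -/
def I1 : (AQ1 XG XA ⊕ AQ2 S XG XA) → Set XG := Sum.elim Prod.fst Prod.fst

/-- The projection `I₂` onto the attacker-state component. -/
def I2 : (AQ1 XG XA ⊕ AQ2 S XG XA) → XA := Sum.elim (fun p => p.2) (fun q => q.2.1)

/-- The language `L(𝒜)` of the arena. -/
def LA (So Suc Sa : Set S) (δG : XG → S → Option XG) (δA : XA → Ev S → Option XA)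
    (x0G : XG) (x0A : XA) : Set (List (Set S ⊕ Ev S)) :=
  Lang (δAr So Suc Sa δG δA) (Sum.inl (arenaInit x0G x0A))

/-- The language `L(𝒜^{trim})`: strings of `L(𝒜)` whose runs visit no state `q`
with `I₁(q) ∩ X_crit ≠ ∅`. -/
def LAtrim (So Suc Sa : Set S) (δG : XG → S → Option XG)
    (δA : XA → Ev S → Option XA) (x0G : XG) (x0A : XA) (Xcrit : Set XG) :
    Set (List (Set S ⊕ Ev S)) :=
  {s | s ∈ LA So Suc Sa δG δA x0G x0A ∧
    ∀ u, u <+: s → ∀ st, run (δAr So Suc Sa δG δA) (Sum.inl (arenaInit x0G x0A)) u =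
      some st → I1 st ∩ Xcrit = ∅}

/-- The controllable meta-events `E_c = Γ \ {Σ_uc}`. -/
def Ec (Suc : Set S) : Set (Set S ⊕ Ev S) :=
  {a | ∃ γ : Set S, a = Sum.inl γ ∧ Suc ⊆ γ ∧ γ ≠ Suc}

/-- `K` is controllable w.r.t. `L` and the uncontrollable events `Euc`. -/
def ControllableLang {E : Type} (L : Set (List E)) (Euc : Set E)
    (K : Set (List E)) : Prop :=
  ∀ s ∈ K, ∀ a ∈ Euc, s ++ [a] ∈ L → s ++ [a] ∈ K

/-- `K` is normal w.r.t. the projection `P` and `L`: `K = P⁻¹(P(K)) ∩ L`. -/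
def NormalLang {E : Type} (P : List E → List E) (L K : Set (List E)) : Prop :=
  K = {s | s ∈ L ∧ ∃ t ∈ K, P t = P s}

/-- Natural projection of meta-strings onto the observable meta-events
`E_o = E \ Σ_a^e`. -/
def projEo : List (Set S ⊕ Ev S) → List (Set S ⊕ Ev S) := fun s =>
  s.flatMap fun a =>
    match a with
    | Sum.inr (.ins _) => []
    | Sum.inr (.del _) => []
    | a => [a]

/-- `L(𝒜^{sup})`: the union of all sublanguages of `L(𝒜^{trim})` that are
controllable w.r.t. `L(𝒜)` and `E \ E_c` and normal w.r.t. `E_o` and `L(𝒜)`. -/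
def Lsup (So Suc Sa : Set S) (δG : XG → S → Option XG)
    (δA : XA → Ev S → Option XA) (x0G : XG) (x0A : XA) (Xcrit : Set XG) :
    Set (List (Set S ⊕ Ev S)) :=
  ⋃₀ {K | K ⊆ LAtrim So Suc Sa δG δA x0G x0A Xcrit ∧
      ControllableLang (LA So Suc Sa δG δA x0G x0A) (Ec Suc)ᶜ K ∧
      NormalLang projEo (LA So Suc Sa δG δA x0G x0A) K}

/-- The run word `W(s; γ₀, …, γ_{|s|})` in the arena. -/
def Wword (γ0 : Set S) (s : List (Ev S)) (γs : List (Set S)) :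
    List (Set S ⊕ Ev S) :=
  Sum.inl γ0 :: (s.zip γs).flatMap fun p =>
    match p.1 with
    | .plain a => [Sum.inr (Ev.plain a), Sum.inl p.2]
    | .del a => [Sum.inr (Ev.del a)]
    | .ins a => [Sum.inr (Ev.ins a), Sum.inr (Ev.plain a), Sum.inl p.2]

/-- The projection `η : E* → Σ_o*` erasing all meta-events not in `Σ_o`. -/
def ηproj (So : Set S) : List (Set S ⊕ Ev S) → List S := fun s =>
  s.flatMap fun a =>
    match a with
    | Sum.inr (.plain e) => if e ∈ So then [e] else []
    | _ => []


/-- The all-out attack strategy: a single state with every event of `Σ_{o,e}`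
defined (as a self-loop). -/
def allOutδ (So Sa : Set S) : Unit → Ev S → Option Unit := fun _ e =>
  if inOe So Sa e then some () else none

/-- The supervisor extracted from a generator of `L(𝒜^{sup})` by a choice
function `c` of control decisions (Algorithm 1): on an observable enabled event
follow the arena (choose `c y`, then the event), on an unobservable enabled
event self-loop, and disable events outside `c y`. -/
def extractR {Y : Type} (So : Set S) (δg : Y → (Set S ⊕ Ev S) → Option Y)
    (c : Y → Set S) : Y → S → Option Y := fun y a =>
  if a ∈ c y then
    if a ∈ So then
      some (((δg y (Sum.inl (c y))).bind fun y' =>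
        δg y' (Sum.inr (Ev.plain a))).getD y)
    else some y
  else none

/-- The language `L_R` built inductively from a supervisor `R` inside the arena:
`ε ∈ L_R`; from a player-2 state every event of `Σ_{o,e}` feasible in `𝒜` may be
appended; from a player-1 state the control decisions `Σ_uc` and `C_R(η(s))`
may be appended. -/
inductive LRmem {S XG XA XR : Type} (So Suc Sa : Set S)
    (δG : XG → S → Option XG) (x0G : XG)
    (δA : XA → Ev S → Option XA) (x0A : XA)
    (δR : XR → S → Option XR) (x0R : XR) : List (Set S ⊕ Ev S) → Prop
  | nil : LRmem So Suc Sa δG x0G δA x0A δR x0R []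
  | p2 (s : List (Set S ⊕ Ev S)) (q : AQ2 S XG XA) (e : Ev S) :
      LRmem So Suc Sa δG x0G δA x0A δR x0R s →
      run (δAr So Suc Sa δG δA) (Sum.inl (arenaInit x0G x0A)) s = some (Sum.inr q) →
      inOe So Sa e →
      (run (δAr So Suc Sa δG δA) (Sum.inl (arenaInit x0G x0A))
        (s ++ [Sum.inr e])).isSome →
      LRmem So Suc Sa δG x0G δA x0A δR x0R (s ++ [Sum.inr e])
  | p1uc (s : List (Set S ⊕ Ev S)) (p : AQ1 XG XA) :
      LRmem So Suc Sa δG x0G δA x0A δR x0R s →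
      run (δAr So Suc Sa δG δA) (Sum.inl (arenaInit x0G x0A)) s = some (Sum.inl p) →
      LRmem So Suc Sa δG x0G δA x0A δR x0R (s ++ [Sum.inl Suc])
  | p1R (s : List (Set S ⊕ Ev S)) (p : AQ1 XG XA) :
      LRmem So Suc Sa δG x0G δA x0A δR x0R s →
      run (δAr So Suc Sa δG δA) (Sum.inl (arenaInit x0G x0A)) s = some (Sum.inl p) →
      LRmem So Suc Sa δG x0G δA x0A δR x0R (s ++ [Sum.inl (CR δR x0R (ηproj So s))])

/-!
After an observation `s ∈ Σ_{o,e}*`, every state of `G_a ‖ R_a ‖ A` reached by a string with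
observable part `s` has the same supervisor and attacker components: the supervisor is in
`Δ_R(x_{0,R}, P^S(s))`, since only legitimate and inserted events move it and enabled unobservable
events self-loop, and the attacker is in `δ_A(x_{0,A}, s)`. So the reached set is
`RE(s) × {(Δ_R(x_{0,R}, P^S(s)), δ_A(x_{0,A}, s))}`, and it evolves by one observable step
followed by the unobservable reach under the current control decision `Γ_R(Δ_R(x_{0,R}, P^S(s)))`.
This is exactly the update `H₂` performs on its first component, so induction on `s` gives the
claim.
-/

section Automaton

variable {X E : Type} (δ : X → E → Option X) (obs : E → Bool)

lemma run_append (x : X) (s t : List E) :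
    run δ x (s ++ t) = (run δ x s).bind fun y => run δ y t := by
  induction s generalizing x with
  | nil => rfl
  | cons e s ih => cases h : δ x e <;> simp [run, h, ih]

lemma run_map_of_step {Y : Type} {δ' : Y → E → Option Y} (f : X → Y)
    (hstep : ∀ x e x', δ x e = some x' → δ' (f x) e = some (f x')) {x x' : X} {t : List E}
    (h : run δ x t = some x') : run δ' (f x) t = some (f x') := by
  induction t generalizing x with
  | nil => simpa [run] using congrArg f (Option.some.inj h)
  | cons e t ih =>
    obtain ⟨y, hy, ht⟩ := Option.bind_eq_some_iff.1 h
    simp [run, hstep x e y hy, ih ht]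

def obsReach (x0 : X) (s : List E) : Set X :=
  {x | ∃ t, t.filter obs = s ∧ run δ x0 t = some x}

def unobsReach (Q : Set X) : Set X :=
  {x | ∃ q ∈ Q, ∃ u, (∀ e ∈ u, obs e = false) ∧ run δ q u = some x}

def stepSet (e : E) (Q : Set X) : Set X :=
  {x | ∃ q ∈ Q, δ q e = some x}

lemma obsReach_nil (x0 : X) : obsReach δ obs x0 [] = unobsReach δ obs {x0} := by
  ext x
  simp [obsReach, unobsReach, List.filter_eq_nil_iff]

lemma obsReach_append_singleton (x0 : X) (s : List E) {e : E} (he : obs e = true) :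
    obsReach δ obs x0 (s ++ [e]) = unobsReach δ obs (stepSet δ e (obsReach δ obs x0 s)) := by
  ext x
  constructor
  · rintro ⟨t, ht, hrun⟩
    obtain ⟨t₁, t₂, rfl, ht₁, ht₂⟩ := List.filter_eq_append_iff.1 ht
    obtain ⟨w, u, rfl, hw, -, hu⟩ := List.filter_eq_cons_iff.1 ht₂
    rw [← List.append_assoc, run_append] at hrun
    obtain ⟨x₁, hx₁, hrun⟩ := Option.bind_eq_some_iff.1 hrun
    obtain ⟨x₂, hx₂, hrun⟩ := Option.bind_eq_some_iff.1 hrun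
    refine ⟨x₂, ⟨x₁, ⟨t₁ ++ w, ?_, hx₁⟩, hx₂⟩, u, by simpa using List.filter_eq_nil_iff.1 hu,
      hrun⟩
    simp [List.filter_append, ht₁, List.filter_eq_nil_iff.2 hw]
  · rintro ⟨x₂, ⟨x₁, ⟨t, ht, hx₁⟩, hx₂⟩, u, hu, hrun⟩
    refine ⟨t ++ e :: u, ?_, ?_⟩
    · simp [List.filter_append, ht, he, List.filter_eq_nil_iff.2 (by simpa using hu)]
    · simp [run_append, hx₁, run, hx₂, hrun]

end Automaton

section Composition

variable {So Suc Sa : Set S} {δG : XG → S → Option XG}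
  {δR : XR → S → Option XR} {δA : XA → Ev S → Option XA}

def IsObs (So : Set S) : Ev S → Bool
  | .plain a => decide (a ∈ So)
  | _ => true

lemma projOe_eq_filter (t : List (Ev S)) : projOe So t = t.filter (IsObs So) := by
  induction t with
  | nil => rfl
  | cons e t ih =>
    cases e with
    | plain a => by_cases ha : a ∈ So <;> simp_all [projOe, IsObs]
    | ins a | del a => simp_all [projOe, IsObs, List.filter_cons]

lemma δGRA_eq_some_iff {x : XG} {y : XR} {z : XA} {e : Ev S} {p' : XG × XR × XA} :
    δGRA So Sa δG δR δA (x, y, z) e = some p' ↔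
      ∃ x' y' z', δGa Sa δG x e = some x' ∧ δRa Sa δR y e = some y' ∧
        (if IsObs So e then δA z e else some z) = some z' ∧ p' = (x', y', z') := by
  cases e with
  | plain a =>
    rcases hG : δGa Sa δG x (.plain a) with _ | x' <;>
    rcases hR : δRa Sa δR y (.plain a) with _ | y' <;>
    rcases hA : δA z (.plain a) with _ | z' <;>
    by_cases ha : a ∈ So <;> simp [δGRA, IsObs, ha, hG, hR, hA, eq_comm]
  | ins a | del a =>
    rcases hG : δGa Sa δG x _ with _ | x' <;>
    rcases hR : δRa Sa δR y _ with _ | y' <;>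
    rcases hA : δA z _ with _ | z' <;> simp [δGRA, IsObs, hG, hR, hA, eq_comm]

lemma δGRA_fst {p p' : XG × XR × XA} {e : Ev S}
    (h : δGRA So Sa δG δR δA p e = some p') : δGa Sa δG p.1 e = some p'.1 := by
  obtain ⟨x', y', z', hx', -, -, rfl⟩ := δGRA_eq_some_iff.1 h
  exact hx'

lemma δGRA_plain_eq_some_iff (hR : IsSupRealization So Suc δR) {b : S} (hb : b ∉ So)
    {x : XG} {y : XR} {z : XA} {p' : XG × XR × XA} :
    δGRA So Sa δG δR δA (x, y, z) (.plain b) = some p' ↔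
      b ∈ ΓR δR y ∧ ∃ x', δG x b = some x' ∧ p' = (x', y, z) := by
  rw [δGRA_eq_some_iff]
  simp only [δGa, δRa, IsObs, hb, decide_false, Bool.false_eq_true, if_false, Option.some.injEq]
  constructor
  · rintro ⟨x', y', _, hx', hy', rfl, rfl⟩
    obtain rfl : y' = y := Option.some.inj (hy'.symm.trans (hR.2 y b hb (by simp [hy'])))
    exact ⟨by simp [ΓR, hy'], x', hx', rfl⟩
  · rintro ⟨hy, x', hx', rfl⟩
    exact ⟨x', y, z, hx', hR.2 y b hb hy, rfl, rfl⟩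

lemma exists_map_plain_of_unobs {u : List (Ev S)} (hu : ∀ e ∈ u, IsObs So e = false) :
    ∃ v : List S, u = v.map .plain ∧ ∀ b ∈ v, b ∉ So := by
  induction u with
  | nil => exact ⟨[], rfl, by simp⟩
  | cons e u ih =>
    simp only [List.mem_cons, forall_eq_or_imp] at hu
    obtain ⟨v, rfl, hv⟩ := ih hu.2
    cases e with
    | plain a => exact ⟨a :: v, rfl, by simpa [IsObs] using And.intro hu.1 hv⟩
    | ins a | del a => simp [IsObs] at hu

lemma run_δGRA_map_plain_eq_some_iff (hR : IsSupRealization So Suc δR) {v : List S}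
    (hv : ∀ b ∈ v, b ∉ So) {x : XG} {y : XR} {z : XA} {p : XG × XR × XA} :
    run (δGRA So Sa δG δR δA) (x, y, z) (v.map .plain) = some p ↔
      (∀ b ∈ v, b ∈ ΓR δR y) ∧ ∃ x', run δG x v = some x' ∧ p = (x', y, z) := by
  induction v generalizing x with
  | nil => simp [run, eq_comm]
  | cons b v ih =>
    simp only [List.mem_cons, forall_eq_or_imp] at hv
    rw [List.map_cons, run, Option.bind_eq_some_iff]
    constructor
    · rintro ⟨p₁, hstep, hrun⟩
      obtain ⟨hb, x₁, hx₁, rfl⟩ := (δGRA_plain_eq_some_iff hR hv.1).1 hstep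
      obtain ⟨hv', x', hx', rfl⟩ := (ih hv.2).1 hrun
      exact ⟨List.forall_mem_cons.2 ⟨hb, hv'⟩, x', by simp [run, hx₁, hx'], rfl⟩
    · rintro ⟨hbv, x', hx', rfl⟩
      obtain ⟨hb, hv'⟩ := List.forall_mem_cons.1 hbv
      obtain ⟨x₁, hx₁, hx'⟩ := Option.bind_eq_some_iff.1 hx'
      exact ⟨_, (δGRA_plain_eq_some_iff hR hv.1).2 ⟨hb, x₁, hx₁, rfl⟩,
        (ih hv.2).2 ⟨hv', x', hx', rfl⟩⟩

lemma unobsReach_δGRA_prod (hR : IsSupRealization So Suc δR) (Q : Set XG) (y : XR) (z : XA) :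
    unobsReach (δGRA So Sa δG δR δA) (IsObs So) (Q ×ˢ {(y, z)}) =
      URch So δG (ΓR δR y) Q ×ˢ {(y, z)} := by
  ext ⟨x', y', z'⟩
  simp only [unobsReach, URch, Set.mem_prod, Set.mem_singleton_iff, Prod.exists, Prod.mk.injEq]
  constructor
  · rintro ⟨x, _, _, ⟨hx, rfl, rfl⟩, u, hu, hrun⟩
    obtain ⟨v, rfl, hv⟩ := exists_map_plain_of_unobs hu
    obtain ⟨hvR, x'', hx'', h⟩ := (run_δGRA_map_plain_eq_some_iff hR hv).1 hrun
    simp only [Prod.mk.injEq] at h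
    obtain ⟨rfl, rfl, rfl⟩ := h
    exact ⟨⟨v, fun b hb => ⟨hv b hb, hvR b hb⟩, x, hx, hx''⟩, rfl, rfl⟩
  · rintro ⟨⟨v, hv, x, hx, hrun⟩, rfl, rfl⟩
    have hvo : ∀ b ∈ v, b ∉ So := fun b hb => (hv b hb).1
    refine ⟨x, y', z', ⟨hx, rfl, rfl⟩, v.map .plain, by simpa [IsObs] using hvo,
      (run_δGRA_map_plain_eq_some_iff hR hvo).2 ⟨fun b hb => (hv b hb).2, x', hrun, rfl⟩⟩

lemma stepSet_δGRA_plain {a : S} (ha : a ∈ So) {y y' : XR} {z z' : XA}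
    (hy : δR y a = some y') (hz : δA z (.plain a) = some z') (Q : Set XG) :
    stepSet (δGRA So Sa δG δR δA) (.plain a) (Q ×ˢ {(y, z)}) = NXr δG a Q ×ˢ {(y', z')} := by
  ext ⟨x', y'', z''⟩
  simp [stepSet, NXr, δGRA_eq_some_iff, δGa, δRa, IsObs, ha, hy, hz, ← and_assoc,
    exists_and_right]

lemma stepSet_δGRA_ins {a : S} (ha : a ∈ Sa) {y : XR} {z z' : XA}
    (hz : δA z (.ins a) = some z') (Q : Set XG) :
    stepSet (δGRA So Sa δG δR δA) (.ins a) (Q ×ˢ {(y, z)}) = Q ×ˢ {((δR y a).getD y, z')} := by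
  ext ⟨x', y'', z''⟩
  rcases hy : δR y a with _ | y₁ <;> simp [stepSet, δGRA_eq_some_iff, δGa, δRa, IsObs, ha, hy, hz]

lemma stepSet_δGRA_del {a : S} (ha : a ∈ Sa) {y : XR} {z z' : XA}
    (hy : a ∈ ΓR δR y) (hz : δA z (.del a) = some z') (Q : Set XG) :
    stepSet (δGRA So Sa δG δR δA) (.del a) (Q ×ˢ {(y, z)}) = NXr δG a Q ×ˢ {(y, z')} := by
  ext ⟨x', y'', z''⟩
  simp [stepSet, NXr, δGRA_eq_some_iff, δGa, δRa, IsObs, ha, hz, show (δR y a).isSome from hy,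
    ← and_assoc, exists_and_right]

lemma RE_eq_image_obsReach (x0G : XG) (x0R : XR) (x0A : XA) (s : List (Ev S)) :
    RE So Sa δG x0G δR x0R δA x0A s =
      Prod.fst '' obsReach (δGRA So Sa δG δR δA) (IsObs So) (x0G, x0R, x0A) s := by
  have hfst {t p} (h : run (δGRA So Sa δG δR δA) (x0G, x0R, x0A) t = some p) :
      run (δGa Sa δG) x0G t = some p.1 :=
    run_map_of_step _ Prod.fst (fun _ _ _ => δGRA_fst) h
  ext x
  constructor
  · rintro ⟨t, hs, hL, hx⟩
    obtain ⟨p, hp⟩ := Option.isSome_iff_exists.1 hL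
    refine ⟨p, ⟨t, projOe_eq_filter t ▸ hs, hp⟩, Option.some.inj ?_⟩
    rw [← hx, hfst hp]
  · rintro ⟨p, ⟨t, hs, hp⟩, rfl⟩
    exact ⟨t, projOe_eq_filter t ▸ hs, by simp [Lang, hp], hfst hp⟩

end Composition

section Arena

variable {So Suc Sa : Set S} {δG : XG → S → Option XG}
  {δR : XR → S → Option XR} {δA : XA → Ev S → Option XA}

lemma H2_plain_eq_some {q' q : AQ2 S XG XA} {a : S} {γ : Set S} (hσ : q'.2.2.2 = none)
    (h : H2 So Sa δG δA q' (.plain a) γ = some q) :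
    a ∈ So ∧ a ∈ q'.2.2.1 ∧ ∃ z, δA q'.2.1 (.plain a) = some z ∧
      q = h1 So δG (NXr δG a q'.1, z) γ := by
  obtain ⟨Q, z, γ', σ⟩ := q'
  subst hσ
  rcases hz : δA z (.plain a) with _ | z₁ <;> by_cases ha : a ∈ So <;>
    by_cases hc : a ∈ ΓGset δG Q ∧ a ∈ γ' <;> simp_all [H2, h2, h1, eq_comm]

lemma H2_ins_eq_some {q' q : AQ2 S XG XA} {a : S} {γ : Set S} (hσ : q'.2.2.2 = none)
    (h : H2 So Sa δG δA q' (.ins a) γ = some q) :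
    a ∈ Sa ∧ ∃ z, δA q'.2.1 (.ins a) = some z ∧ q = h1 So δG (q'.1, z) γ := by
  obtain ⟨Q, z, γ', σ⟩ := q'
  subst hσ
  rcases hz : δA z (.ins a) with _ | z₁ <;> by_cases ha : a ∈ Sa <;>
    by_cases ho : a ∈ So <;> simp_all [H2, h2, h1, eq_comm]

lemma H2_del_eq_some {q' q : AQ2 S XG XA} {a : S} {γ : Set S} (hσ : q'.2.2.2 = none)
    (h : H2 So Sa δG δA q' (.del a) γ = some q) :
    a ∈ Sa ∧ a ∈ q'.2.2.1 ∧ ∃ z, δA q'.2.1 (.del a) = some z ∧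
      q = h1 So δG (NXr δG a q'.1, z) q'.2.2.1 := by
  obtain ⟨Q, z, γ', σ⟩ := q'
  subst hσ
  rcases hz : δA z (.del a) with _ | z₁ <;> by_cases ha : a ∈ Sa <;>
    by_cases hc : a ∈ ΓGset δG Q ∧ a ∈ γ' <;> simp_all [H2, h2, h1, eq_comm]

lemma H2run_append_singleton (q : AQ2 S XG XA) {s : List (Ev S)} {γs : List (Set S)}
    (hlen : γs.length = s.length) (e : Ev S) (γ : Set S) :
    H2run So Sa δG δA q (s ++ [e]) (γs ++ [γ]) =
      (H2run So Sa δG δA q s γs).bind fun q' => H2 So Sa δG δA q' e γ := by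
  induction s generalizing γs q with
  | nil =>
    obtain rfl := List.length_eq_zero_iff.1 hlen
    cases H2 So Sa δG δA q e γ <;> simp [H2run]
  | cons e' s ih =>
    obtain ⟨γ', γs, rfl⟩ := List.exists_cons_of_length_eq_add_one hlen
    cases h : H2 So Sa δG δA q e' γ' <;>
      simp [H2run, h, ih _ (Nat.succ.inj hlen)]

lemma ctrlSeq_length (x0R : XR) (s : List (Ev S)) : (ctrlSeq δR x0R s).length = s.length := by
  simp [ctrlSeq]

lemma ctrlSeq_append_singleton (x0R : XR) (s : List (Ev S)) (e : Ev S) :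
    ctrlSeq δR x0R (s ++ [e]) = ctrlSeq δR x0R s ++ [CR δR x0R (PSproj (s ++ [e]))] := by
  simp only [ctrlSeq, List.length_append, List.length_singleton, List.range_succ, List.map_append,
    List.map_singleton, List.take_of_length_le (by simp : (s ++ [e]).length ≤ s.length + 1)]
  congr 1
  refine List.map_congr_left fun i hi => ?_
  rw [List.take_append_of_le_length (by simpa using hi)]

end Arena

section Tracking

variable {So Suc Sa : Set S} {δG : XG → S → Option XG}
  {δR : XR → S → Option XR} {δA : XA → Ev S → Option XA} {x0G : XG} {x0R : XR} {x0A : XA}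

lemma ΔRrun_append (y : XR) (s t : List S) :
    ΔRrun δR y (s ++ t) = ΔRrun δR (ΔRrun δR y s) t := by
  induction s generalizing y with
  | nil => rfl
  | cons e s ih => exact ih _

lemma PSproj_append_plain (s : List (Ev S)) (a : S) : PSproj (s ++ [.plain a]) = PSproj s ++ [a] :=
  List.flatMap_append ..

lemma PSproj_append_ins (s : List (Ev S)) (a : S) : PSproj (s ++ [.ins a]) = PSproj s ++ [a] :=
  List.flatMap_append ..

lemma PSproj_append_del (s : List (Ev S)) (a : S) : PSproj (s ++ [.del a]) = PSproj s := by
  simp [PSproj]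

variable (So Sa δG δR δA x0G x0R x0A) in
def Tracks (s : List (Ev S)) (q : AQ2 S XG XA) : Prop :=
  obsReach (δGRA So Sa δG δR δA) (IsObs So) (x0G, x0R, x0A) s =
      q.1 ×ˢ {(ΔRrun δR x0R (PSproj s), q.2.1)} ∧
    q.2.2.1 = CR δR x0R (PSproj s) ∧ q.2.2.2 = none

lemma tracks_nil (hR : IsSupRealization So Suc δR) :
    Tracks So Sa δG δR δA x0G x0R x0A [] (h1 So δG (arenaInit x0G x0A) (CR δR x0R [])) := by
  refine ⟨?_, rfl, rfl⟩
  rw [obsReach_nil, ← Set.singleton_prod_singleton, unobsReach_δGRA_prod hR]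
  rfl

lemma Tracks.append_singleton (hR : IsSupRealization So Suc δR) {s : List (Ev S)} {e : Ev S}
    {q' q : AQ2 S XG XA} (hq' : Tracks So Sa δG δR δA x0G x0R x0A s q')
    (h : H2 So Sa δG δA q' e (CR δR x0R (PSproj (s ++ [e]))) = some q) :
    Tracks So Sa δG δR δA x0G x0R x0A (s ++ [e]) q := by
  obtain ⟨hreach, hγ, hσ⟩ := hq'
  cases e with
  | plain a =>
    obtain ⟨ha, haγ, z, hz, rfl⟩ := H2_plain_eq_some hσ h
    rw [hγ] at haγ
    obtain ⟨y, hy⟩ := Option.isSome_iff_exists.1 haγ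
    have hY : ΔRrun δR x0R (PSproj (s ++ [.plain a])) = y := by
      simp [PSproj_append_plain, ΔRrun_append, ΔRrun, hy]
    refine ⟨?_, rfl, rfl⟩
    rw [obsReach_append_singleton _ _ _ _ (by simpa [IsObs] using ha), hreach,
      stepSet_δGRA_plain ha hy hz, unobsReach_δGRA_prod hR, hY]
    simp [h1, CR, hY, ΓR]
  | ins a =>
    obtain ⟨ha, z, hz, rfl⟩ := H2_ins_eq_some hσ h
    have hY : ΔRrun δR x0R (PSproj (s ++ [.ins a])) =
        (δR (ΔRrun δR x0R (PSproj s)) a).getD (ΔRrun δR x0R (PSproj s)) := by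
      simp [PSproj_append_ins, ΔRrun_append, ΔRrun]
    refine ⟨?_, rfl, rfl⟩
    rw [obsReach_append_singleton _ _ _ _ rfl, hreach, stepSet_δGRA_ins ha hz,
      unobsReach_δGRA_prod hR, hY]
    simp [h1, CR, hY, ΓR]
  | del a =>
    obtain ⟨ha, haγ, z, hz, rfl⟩ := H2_del_eq_some hσ h
    refine ⟨?_, by simp [h1, hγ, PSproj_append_del], rfl⟩
    rw [obsReach_append_singleton _ _ _ _ rfl, hreach, stepSet_δGRA_del ha (by rwa [hγ] at haγ) hz,
      unobsReach_δGRA_prod hR, PSproj_append_del]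
    simp [h1, hγ, CR, ΓR]

lemma tracks_H2run (hR : IsSupRealization So Suc δR) (s : List (Ev S)) {q : AQ2 S XG XA}
    (h : H2run So Sa δG δA (h1 So δG (arenaInit x0G x0A) (CR δR x0R [])) s (ctrlSeq δR x0R s) =
      some q) :
    Tracks So Sa δG δR δA x0G x0R x0A s q := by
  induction s using List.reverseRecOn generalizing q with
  | nil =>
    obtain rfl := Option.some.inj h
    exact tracks_nil hR
  | append_singleton s e ih =>
    rw [ctrlSeq_append_singleton, H2run_append_singleton _ (ctrlSeq_length _ _),
      Option.bind_eq_some_iff] at h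
    obtain ⟨q', hq', h⟩ := h
    exact (ih hq').append_singleton hR h

end Tracking

theorem arena_run_state_estimate_general
    (So Suc Sa : Set S)
    (δG : XG → S → Option XG) (x0G : XG)
    (δR : XR → S → Option XR) (x0R : XR) (hR : IsSupRealization So Suc δR)
    (δA : XA → Ev S → Option XA) (x0A : XA)
    (s : List (Ev S)) :
    ∀ q, H2run So Sa δG δA (h1 So δG (arenaInit x0G x0A) (CR δR x0R []))
        s (ctrlSeq δR x0R s) = some q →
      q.1 = RE So Sa δG x0G δR x0R δA x0A s := by
  intro q h
  rw [RE_eq_image_obsReach, (tracks_H2run hR s h).1]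
  exact (Set.fst_image_prod _ (Set.singleton_nonempty _)).symm

/-- Proposition 1, Eq. (16): the state-estimate component of the
arena run equals the attacked state estimate:
`I₁(H₂(x₀, s, γ₁…γ_{|s|})) = RE(s)`. -/
theorem arena_run_state_estimate
    [Finite S] [Finite XG] [Finite XR] [Finite XA]
    (So Suc Sa : Set S) (hSa : Sa ⊆ So)
    (δG : XG → S → Option XG) (x0G : XG)
    (δR : XR → S → Option XR) (x0R : XR) (hR : IsSupRealization So Suc δR)
    (δA : XA → Ev S → Option XA) (x0A : XA) (hA : IsAttack So Sa δA)
    (s : List (Ev S))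
    (hs : s ∈ projOe So '' Lang (δGRA So Sa δG δR δA) (x0G, x0R, x0A)) :
    ∀ q, H2run So Sa δG δA (h1 So δG (arenaInit x0G x0A) (CR δR x0R []))
        s (ctrlSeq δR x0R s) = some q →
      q.1 = RE So Sa δG x0G δR x0R δA x0A s :=
  arena_run_state_estimate_general So Suc Sa δG x0G δR x0R hR δA x0A s
end RobustDES
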